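/- Let b = [[1,1,0,0],[0,0,0,0],[0,0,0,0],[0,0,1,1]] (matrix b^(13)) and I the 2×2 identity, over ℂ(ξ_α,ξ_β,ξ_γ). With R_{βα} = −(I⊗I − ξ_α b)⁻¹(I⊗I − ξ_β b), the Yang–Baxter equation (R_{γβ}⊗I)(I⊗R_{γα})(R_{βα}⊗I) = (I⊗R_{βα})(R_{γα}⊗I)(I⊗R_{γβ}) holds. -/
import Mathlib


open Matrix

set_option maxHeartbeats 1000000

noncomputable section

/-- The field of rational functions in the three spectral parameters `ξ_α, ξ_β, ξ_γ`. -/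
abbrev KK : Type := FractionRing (MvPolynomial (Fin 3) ℚ)

/-- The spectral parameters `ξ 0 = ξ_α`, `ξ 1 = ξ_β`, `ξ 2 = ξ_γ` as elements of `KK`. -/
def xi (i : Fin 3) : KK := algebraMap (MvPolynomial (Fin 3) ℚ) KK (MvPolynomial.X i)

/-- Reindexing of a 4×4 matrix by pairs, lexicographically: 0↦11, 1↦12, 2↦21, 3↦22. -/
def toPairs (M : Matrix (Fin 4) (Fin 4) KK) :
    Matrix (Fin 2 × Fin 2) (Fin 2 × Fin 2) KK :=
  Matrix.reindex finProdFinEquiv.symm finProdFinEquiv.symm M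

/-- The matrix `b^(13)` of Alimohammadi–Ahmadi. -/
def bmat : Matrix (Fin 2 × Fin 2) (Fin 2 × Fin 2) KK :=
  toPairs !![1,1,0,0; 0,0,0,0; 0,0,0,0; 0,0,1,1]

/-- The scattering matrix `R_{βα} = −(I⊗I − ξ_α b)⁻¹ (I⊗I − ξ_β b)`
(here `1` is the 4×4 identity `I⊗I`). -/
def R (β α : Fin 3) : Matrix (Fin 2 × Fin 2) (Fin 2 × Fin 2) KK :=
  -((1 - xi α • bmat)⁻¹ * (1 - xi β • bmat))

/-- `A ⊗ I` acting on the first two tensor factors of `(ℂ²)^{⊗3}`. -/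
def legL (A : Matrix (Fin 2 × Fin 2) (Fin 2 × Fin 2) KK) :
    Matrix (Fin 2 × Fin 2 × Fin 2) (Fin 2 × Fin 2 × Fin 2) KK :=
  Matrix.of fun p q => A (p.1, p.2.1) (q.1, q.2.1) * (if p.2.2 = q.2.2 then 1 else 0)

/-- `I ⊗ A` acting on the last two tensor factors of `(ℂ²)^{⊗3}`. -/
def legR (A : Matrix (Fin 2 × Fin 2) (Fin 2 × Fin 2) KK) :
    Matrix (Fin 2 × Fin 2 × Fin 2) (Fin 2 × Fin 2 × Fin 2) KK :=
  Matrix.of fun p q => (if p.1 = q.1 then 1 else 0) * A (p.2.1, p.2.2) (q.2.1, q.2.2)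

/-! ### Auxiliary material -/

/-- Integer model of `bmat`. -/
def bZ : Matrix (Fin 2 × Fin 2) (Fin 2 × Fin 2) ℤ :=
  Matrix.of fun p q => if p.1 = p.2 ∧ p.1 = q.1 then 1 else 0

/-- Integer model of `legL bmat`. -/
def XZ : Matrix (Fin 2 × Fin 2 × Fin 2) (Fin 2 × Fin 2 × Fin 2) ℤ :=
  Matrix.of fun p q => bZ (p.1, p.2.1) (q.1, q.2.1) * (if p.2.2 = q.2.2 then 1 else 0)

/-- Integer model of `legR bmat`. -/
def YZ : Matrix (Fin 2 × Fin 2 × Fin 2) (Fin 2 × Fin 2 × Fin 2) ℤ :=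
  Matrix.of fun p q => (if p.1 = q.1 then 1 else 0) * bZ (p.2.1, p.2.2) (q.2.1, q.2.2)

lemma bmat_eq_map : bmat = bZ.map (Int.cast : ℤ → KK) := by
  ext ⟨a,b⟩ ⟨c,d⟩
  fin_cases a <;> fin_cases b <;> fin_cases c <;> fin_cases d <;>
    simp [bmat, toPairs, finProdFinEquiv, bZ, vecHead, vecTail]

lemma legL_eq_map : legL bmat = XZ.map (Int.cast : ℤ → KK) := by
  ext p q
  simp only [legL, XZ, Matrix.map_apply, Matrix.of_apply, bmat_eq_map, Int.cast_mul]
  split <;> simp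

lemma legR_eq_map : legR bmat = YZ.map (Int.cast : ℤ → KK) := by
  ext p q
  simp only [legR, YZ, Matrix.map_apply, Matrix.of_apply, bmat_eq_map, Int.cast_mul]
  split <;> simp

lemma map_rel {n : Type*} [Fintype n] [DecidableEq n] {A B : Matrix n n ℤ} (h : A = B) :
    A.map (Int.cast : ℤ → KK) = B.map (Int.cast : ℤ → KK) := by rw [h]

lemma map_mul' {n : Type*} [Fintype n] [DecidableEq n] (A B : Matrix n n ℤ) :
    (A * B).map (Int.cast : ℤ → KK) =
      A.map (Int.cast : ℤ → KK) * B.map (Int.cast : ℤ → KK) :=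
  Matrix.map_mul (f := Int.castRingHom KK)

lemma hbb : bmat * bmat = bmat := by
  rw [bmat_eq_map, ← map_mul']
  exact map_rel (by decide)

lemma hX : legL bmat * legL bmat = legL bmat := by
  rw [legL_eq_map, ← map_mul']
  exact map_rel (by decide)

lemma hY : legR bmat * legR bmat = legR bmat := by
  rw [legR_eq_map, ← map_mul']
  exact map_rel (by decide)

lemma hXYX : legL bmat * (legR bmat * legL bmat) = legR bmat * legL bmat := by
  rw [legL_eq_map, legR_eq_map, ← map_mul', ← map_mul']
  exact map_rel (by decide)

lemma hYXY : legR bmat * (legL bmat * legR bmat) = legR bmat * legL bmat := by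
  rw [legL_eq_map, legR_eq_map, ← map_mul', ← map_mul', ← map_mul']

  exact map_rel (by decide)

lemma key_gen {K A : Type*} [CommRing K] [Ring A] [Algebra K A]
    (x y : A) (hx : x * x = x) (hy : y * y = y)
    (hxyx : x * (y * x) = y * x) (hyxy : y * (x * y) = y * x)
    (a b c : K) :
    ((1-b) • (1:A) + (b-c) • x) * (((1-a) • 1 + (a-c) • y) * ((1-a) • 1 + (a-b) • x)) =
    ((1-a) • (1:A) + (a-b) • y) * (((1-a) • 1 + (a-c) • x) * ((1-b) • 1 + (b-c) • y)) := by
  simp only [add_mul, mul_add, smul_mul_assoc, mul_smul_comm, smul_smul, one_mul, mul_one,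
    hx, hy, hxyx, hyxy]
  module

lemma one_sub_xi_ne (i : Fin 3) : (1 : KK) - xi i ≠ 0 := by
  intro h
  have hinj : Function.Injective (algebraMap (MvPolynomial (Fin 3) ℚ) KK) :=
    IsFractionRing.injective _ _
  have h2 : algebraMap (MvPolynomial (Fin 3) ℚ) KK (1 - MvPolynomial.X i) =
      algebraMap (MvPolynomial (Fin 3) ℚ) KK 0 := by
    simpa [map_sub, xi] using h
  have h3 : (1 - MvPolynomial.X i : MvPolynomial (Fin 3) ℚ) = 0 := hinj h2
  have h4 := congrArg MvPolynomial.constantCoeff h3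
  simp [MvPolynomial.constantCoeff_X] at h4

lemma inv_one_sub_smul (i : Fin 3) :
    (1 - xi i • bmat)⁻¹ = 1 + (xi i / (1 - xi i)) • bmat := by
  apply Matrix.inv_eq_right_inv
  have h : (1 : KK) - xi i ≠ 0 := one_sub_xi_ne i
  have hc : xi i / (1 - xi i) - xi i - xi i / (1 - xi i) * xi i = 0 := by
    field_simp
    ring
  calc (1 - xi i • bmat) * (1 + (xi i / (1 - xi i)) • bmat)
      = 1 + (xi i / (1 - xi i) - xi i - xi i / (1 - xi i) * xi i) • bmat := by
        simp only [mul_sub, sub_mul, mul_add, add_mul, mul_one, one_mul, smul_mul_assoc,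
          mul_smul_comm, smul_smul, hbb, smul_add, smul_sub, sub_smul, add_smul, neg_smul,
          one_smul]
        abel
    _ = 1 := by rw [hc, zero_smul, add_zero]

lemma Rform (β α : Fin 3) :
    R β α = (-(1 - xi α)⁻¹) • ((1 - xi α) • (1 : Matrix (Fin 2 × Fin 2) (Fin 2 × Fin 2) KK)
      + (xi α - xi β) • bmat) := by
  have h : (1 : KK) - xi α ≠ 0 := one_sub_xi_ne α
  rw [R, inv_one_sub_smul]
  have e1 : -(1 - xi α)⁻¹ * (1 - xi α) = -1 := by field_simp
  have e2 : -(1 - xi α)⁻¹ * (xi α - xi β)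
      = xi β - (xi α / (1 - xi α)) + xi β * (xi α / (1 - xi α)) := by
    field_simp
    ring
  calc -((1 + (xi α / (1 - xi α)) • bmat) * (1 - xi β • bmat))
      = (-1 : KK) • (1 : Matrix (Fin 2 × Fin 2) (Fin 2 × Fin 2) KK)
        + (xi β - (xi α / (1 - xi α)) + xi β * (xi α / (1 - xi α))) • bmat := by
        simp only [mul_sub, sub_mul, mul_add, add_mul, mul_one, one_mul, smul_mul_assoc,
          mul_smul_comm, smul_smul, hbb, smul_add, smul_sub, sub_smul, add_smul, neg_smul,
          one_smul]
        abel
    _ = (-(1 - xi α)⁻¹) • ((1 - xi α) • (1 : Matrix (Fin 2 × Fin 2) (Fin 2 × Fin 2) KK)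
        + (xi α - xi β) • bmat) := by
        rw [smul_add, smul_smul, smul_smul, e1, e2, neg_one_smul]

lemma legL_smul (s : KK) (A : Matrix (Fin 2 × Fin 2) (Fin 2 × Fin 2) KK) :
    legL (s • A) = s • legL A := by
  ext p q; simp [legL, mul_assoc]

lemma legR_smul (s : KK) (A : Matrix (Fin 2 × Fin 2) (Fin 2 × Fin 2) KK) :
    legR (s • A) = s • legR A := by
  ext p q; simp [legR, mul_comm, mul_assoc, mul_left_comm]

lemma legL_add (A B : Matrix (Fin 2 × Fin 2) (Fin 2 × Fin 2) KK) :
    legL (A + B) = legL A + legL B := by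
  ext p q; simp only [legL, Matrix.of_apply, Matrix.add_apply, add_mul]

lemma legR_add (A B : Matrix (Fin 2 × Fin 2) (Fin 2 × Fin 2) KK) :
    legR (A + B) = legR A + legR B := by
  ext p q; simp only [legR, Matrix.of_apply, Matrix.add_apply, mul_add]

lemma legL_one : legL 1 = 1 := by
  ext p q
  by_cases h1 : p.1 = q.1 <;> by_cases h2 : p.2.1 = q.2.1 <;> by_cases h3 : p.2.2 = q.2.2 <;>
    simp [legL, Matrix.one_apply, Prod.ext_iff, h1, h2, h3]

lemma legR_one : legR 1 = 1 := by
  ext p q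
  by_cases h1 : p.1 = q.1 <;> by_cases h2 : p.2.1 = q.2.1 <;> by_cases h3 : p.2.2 = q.2.2 <;>
    simp [legR, Matrix.one_apply, Prod.ext_iff, h1, h2, h3]

/-- The Yang–Baxter equation for this interaction matrix:
`(R_{γβ} ⊗ I)(I ⊗ R_{γα})(R_{βα} ⊗ I) = (I ⊗ R_{βα})(R_{γα} ⊗ I)(I ⊗ R_{γβ})`
with `α = 0`, `β = 1`, `γ = 2`. -/
theorem yang_baxter_b13 :
    legL (R 2 1) * legR (R 2 0) * legL (R 1 0) =
      legR (R 1 0) * legL (R 2 0) * legR (R 2 1) := by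
  rw [Rform 2 1, Rform 2 0, Rform 1 0]
  simp only [legL_smul, legR_smul, legL_add, legR_add, legL_one, legR_one]
  simp only [Matrix.smul_mul, Matrix.mul_smul, smul_smul]
  rw [show -(1 - xi 1)⁻¹ * (-(1 - xi 0)⁻¹ * -(1 - xi 0)⁻¹)
      = -(1 - xi 0)⁻¹ * (-(1 - xi 0)⁻¹ * -(1 - xi 1)⁻¹) by ring]
  congr 1
  rw [mul_assoc, mul_assoc]
  exact key_gen (legL bmat) (legR bmat) hX hY hXYX hYXY (xi 0) (xi 1) (xi 2)

end
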